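/- arXiv:1303.4312 — 2 statements merged into one kernel-verified Lean document; each statement's English description precedes it below -/
import Mathlib

section
/- For any index i with 0 ≤ i ≤ m+n, the pair (j,k) with j+k = i, 0 ≤ j ≤ m, 0 ≤ k ≤ n satisfying the co-rank conditions (j = 0 or A(j-1) ≤ B(k)) and (k = 0 or B(k-1) < A(j)) is unique: if (j₁,k₁) and (j₂,k₂) both satisfy them with j₁+k₁ = j₂+k₂ = i, then j₁ = j₂ and k₁ = k₂. -/
/-- Extend a function on `Fin m` to `ℕ` by `+∞` beyond its domain. -/
def extendTop {α : Type*} [LinearOrder α] {m : ℕ} (A : Fin m → α) (j : ℕ) : WithTop α :=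
  if h : j < m then ((A ⟨j, h⟩ : α) : WithTop α) else ⊤

/-- The co-rank conditions for a pair `(j,k)` with `j + k = i`. -/
def IsCoRank {α : Type*} [LinearOrder α] {m n : ℕ} (A : Fin m → α) (B : Fin n → α)
    (i j k : ℕ) : Prop :=
  j + k = i ∧ j ≤ m ∧ k ≤ n ∧
  (j = 0 ∨ extendTop A (j - 1) ≤ extendTop B k) ∧
  (k = 0 ∨ extendTop B (k - 1) < extendTop A j)

section

variable {α : Type*} [LinearOrder α] {m n : ℕ}

theorem Monotone.extendTop {A : Fin m → α} (hA : Monotone A) : Monotone (extendTop A) := by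
  intro a b hab
  unfold _root_.extendTop
  split_ifs with hb ha ha
  · exact WithTop.coe_le_coe.mpr (hA hab)
  · exact le_top
  · omega
  · exact le_rfl

/-- If `j₁ < j₂` then `k₂ < k₁`, and the co-rank conditions would give the cycle
`B (k₁ - 1) < A j₁ ≤ A (j₂ - 1) ≤ B k₂ ≤ B (k₁ - 1)`. -/
theorem IsCoRank.le_of_isCoRank {A : Fin m → α} {B : Fin n → α} (hA : Monotone A)
    (hB : Monotone B) {i j₁ k₁ j₂ k₂ : ℕ} (h₁ : IsCoRank A B i j₁ k₁)
    (h₂ : IsCoRank A B i j₂ k₂) : j₂ ≤ j₁ := by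
  obtain ⟨hsum₁, -, -, -, hB₁⟩ := h₁
  obtain ⟨hsum₂, -, -, hA₂, -⟩ := h₂
  by_contra! hlt
  replace hB₁ := hB₁.resolve_left (by omega)
  replace hA₂ := hA₂.resolve_left (by omega)
  have hA_le : extendTop A j₁ ≤ extendTop A (j₂ - 1) := hA.extendTop (by omega)
  have hB_le : extendTop B k₂ ≤ extendTop B (k₁ - 1) := hB.extendTop (by omega)
  exact (hB₁.trans_le (hA_le.trans (hA₂.trans hB_le))).false

end

theorem corank_unique_general {α : Type*} [LinearOrder α] {m n : ℕ}
    (A : Fin m → α) (B : Fin n → α) (hA : Monotone A) (hB : Monotone B)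
    (i : ℕ) (j₁ k₁ j₂ k₂ : ℕ)
    (h₁ : IsCoRank A B i j₁ k₁) (h₂ : IsCoRank A B i j₂ k₂) :
    j₁ = j₂ ∧ k₁ = k₂ := by
  have hj : j₁ = j₂ := le_antisymm (h₂.le_of_isCoRank hA hB h₁) (h₁.le_of_isCoRank hA hB h₂)
  exact ⟨hj, by have := h₁.1; have := h₂.1; omega⟩

theorem corank_unique {α : Type*} [LinearOrder α] {m n : ℕ}
    (A : Fin m → α) (B : Fin n → α) (hA : Monotone A) (hB : Monotone B)
    (i : ℕ) (hi : i ≤ m + n) (j₁ k₁ j₂ k₂ : ℕ)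
    (h₁ : IsCoRank A B i j₁ k₁) (h₂ : IsCoRank A B i j₂ k₂) :
    j₁ = j₂ ∧ k₁ = k₂ :=
  corank_unique_general A B hA hB i j₁ k₁ j₂ k₂ h₁ h₂
end

section
/- Parallel merge correctness: with block boundaries i_0 = 0 ≤ i_1 ≤ … ≤ i_p = m+n and co-rank pairs (j_r, k_r) for each i_r, the concatenation over r of the stable merges of A[j_r, j_{r+1}) with B[k_r, k_{r+1}) equals the stable merge of A and B. -/
/-- List indexing into `WithTop α`: out-of-range accesses are `+∞`. -/
def getTop {α : Type*} [LinearOrder α] (A : List α) (j : ℕ) : WithTop α :=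
  ((A[j]?).map (fun a => (a : WithTop α))).getD ⊤

/-- The co-rank conditions for a pair `(j,k)` with `j + k = i`. -/
def IsCoRankL {α : Type*} [LinearOrder α] (A B : List α) (i j k : ℕ) : Prop :=
  j + k = i ∧ j ≤ A.length ∧ k ≤ B.length ∧
  (j = 0 ∨ getTop A (j - 1) ≤ getTop B k) ∧
  (k = 0 ∨ getTop B (k - 1) < getTop A j)

/-! At a co-rank pair `(j, k)` of sorted lists, every element of `A[0, j)` is `≤` every element of
`B[k, ∞)` and every element of `B[0, k)` is `<` every element of `A[j, ∞)`. Under these two cross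
conditions the merge steps never mix the prefixes with the suffixes, so the stable merge of `A` and
`B` is the merge of the prefixes followed by the merge of the suffixes. Splitting the suffixes
`A[j_r, ∞)`, `B[k_r, ∞)` at each next co-rank pair `(j_{r+1}, k_{r+1})` telescopes to the theorem. -/

theorem List.merge_append_append {α : Type*} {le : α → α → Bool} :
    ∀ {A₁ A₂ B₁ B₂ : List α}, (∀ a ∈ A₁, ∀ b ∈ B₂, le a b) → (∀ a ∈ A₂, ∀ b ∈ B₁, ¬ le a b) →
      (A₁ ++ A₂).merge (B₁ ++ B₂) le = A₁.merge B₁ le ++ A₂.merge B₂ le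
  | [], _, [], _, _, _ => by simp
  | [], [], _ :: _, _, _, _ => by simp
  | [], a :: A₂, b :: B₁, B₂, h₁, h₂ => by
    have ih := merge_append_append (A₁ := []) (A₂ := a :: A₂) (B₁ := B₁) h₁
      fun a ha b hb => h₂ a ha b (by simp [hb])
    simp only [nil_append, nil_merge] at ih ⊢
    rw [cons_append, cons_merge_cons_neg _ _ _ (h₂ a (by simp) b (by simp)), ih, cons_append]
  | _ :: _, _, [], [], _, _ => by simp
  | a :: A₁, A₂, [], b :: B₂, h₁, h₂ => by
    have ih := merge_append_append (A₁ := A₁) (B₁ := []) (B₂ := b :: B₂)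
      (fun a ha b hb => h₁ a (by simp [ha]) b hb) h₂
    simp only [nil_append, merge_right] at ih ⊢
    rw [cons_append, cons_merge_cons_pos _ _ _ (h₁ a (by simp) b (by simp)), ih, cons_append]
  | a :: A₁, A₂, b :: B₁, B₂, h₁, h₂ => by
    rw [cons_append, cons_append, cons_merge_cons, cons_merge_cons]
    split
    · rw [← cons_append, merge_append_append (fun a ha b hb => h₁ a (by simp [ha]) b hb) h₂]
      simp
    · rw [← cons_append, merge_append_append h₁ fun a ha b hb => h₂ a ha b (by simp [hb])]
      simp

theorem List.flatten_map_range_append_of_eq_append {α : Type*} {f g : ℕ → List α} {p : ℕ}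
    (h : ∀ r < p, f r = g r ++ f (r + 1)) : ((List.range p).map g).flatten ++ f p = f 0 := by
  induction p with
  | zero => simp
  | succ p ih =>
    rw [List.range_succ, List.map_append, List.flatten_append, List.append_assoc,
      List.map_singleton, List.flatten_singleton, ← h p (by omega)]
    exact ih fun r hr => h r (by omega)

section getTop

variable {α : Type*} [LinearOrder α] {A : List α}

theorem getTop_of_lt {j : ℕ} (hj : j < A.length) : getTop A j = A[j] := by
  simp [getTop, hj]

theorem getTop_mono (hA : A.Pairwise (· ≤ ·)) : Monotone (getTop A) := by
  intro s t hst
  by_cases ht : t < A.length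
  · rw [getTop_of_lt (by omega), getTop_of_lt ht, WithTop.coe_le_coe]
    exact hA.rel_get_of_le (a := ⟨s, by omega⟩) (b := ⟨t, ht⟩) hst
  · simp [getTop, List.getElem?_eq_none_iff.mpr (not_lt.mp ht)]

theorem coe_le_getTop_pred_of_mem_take (hA : A.Pairwise (· ≤ ·)) {j : ℕ} {a : α}
    (ha : a ∈ A.take j) : (a : WithTop α) ≤ getTop A (j - 1) := by
  obtain ⟨t, ht, rfl⟩ := List.mem_take_iff_getElem.mp ha
  rw [← getTop_of_lt]
  exact getTop_mono hA (by omega)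

theorem getTop_le_coe_of_mem_drop (hA : A.Pairwise (· ≤ ·)) {j : ℕ} {a : α}
    (ha : a ∈ A.drop j) : getTop A j ≤ a := by
  obtain ⟨t, ht, rfl⟩ := List.mem_drop_iff_getElem.mp ha
  rw [← getTop_of_lt]
  exact getTop_mono hA (by omega)

end getTop

namespace IsCoRankL

variable {α : Type*} [LinearOrder α] {A B : List α} {i j k : ℕ}

theorem le_of_mem_take_of_mem_drop (hA : A.Pairwise (· ≤ ·)) (hB : B.Pairwise (· ≤ ·))
    (h : IsCoRankL A B i j k) {a b : α} (ha : a ∈ A.take j) (hb : b ∈ B.drop k) : a ≤ b := by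
  rcases h.2.2.2.1 with rfl | hjk
  · simp at ha
  · exact WithTop.coe_le_coe.mp <| (coe_le_getTop_pred_of_mem_take hA ha).trans <|
      hjk.trans (getTop_le_coe_of_mem_drop hB hb)

theorem lt_of_mem_drop_of_mem_take (hA : A.Pairwise (· ≤ ·)) (hB : B.Pairwise (· ≤ ·))
    (h : IsCoRankL A B i j k) {a b : α} (ha : a ∈ A.drop j) (hb : b ∈ B.take k) : b < a := by
  rcases h.2.2.2.2 with rfl | hkj
  · simp at hb
  · exact WithTop.coe_lt_coe.mp <| (coe_le_getTop_pred_of_mem_take hB hb).trans_lt <|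
      hkj.trans_le (getTop_le_coe_of_mem_drop hA ha)

theorem merge_drop_eq_append (hA : A.Pairwise (· ≤ ·)) (hB : B.Pairwise (· ≤ ·))
    (h : IsCoRankL A B i j k) {j₀ k₀ : ℕ} (hj : j₀ ≤ j) (hk : k₀ ≤ k) :
    (A.drop j₀).merge (B.drop k₀) (· ≤ ·) =
      ((A.drop j₀).take (j - j₀)).merge ((B.drop k₀).take (k - k₀)) (· ≤ ·) ++
        (A.drop j).merge (B.drop k) (· ≤ ·) := by
  have hA' : (A.drop j₀).drop (j - j₀) = A.drop j := by rw [List.drop_drop]; congr 1; omega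
  have hB' : (B.drop k₀).drop (k - k₀) = B.drop k := by rw [List.drop_drop]; congr 1; omega
  conv_lhs => rw [← List.take_append_drop (j - j₀) (A.drop j₀),
    ← List.take_append_drop (k - k₀) (B.drop k₀), hA', hB']
  refine List.merge_append_append (fun a ha b hb => ?_) (fun a ha b hb => ?_)
  · rw [← List.drop_take] at ha
    exact decide_eq_true (h.le_of_mem_take_of_mem_drop hA hB (List.mem_of_mem_drop ha) hb)
  · rw [← List.drop_take] at hb
    exact mt of_decide_eq_true
      (not_le.mpr (h.lt_of_mem_drop_of_mem_take hA hB ha (List.mem_of_mem_drop hb)))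

end IsCoRankL

theorem parallel_merge_correct_general {α : Type*} [LinearOrder α]
    (A B : List α) (hA : A.Pairwise (· ≤ ·)) (hB : B.Pairwise (· ≤ ·))
    (p : ℕ) (i J K : ℕ → ℕ)
    (hi0 : i 0 = 0) (hip : i p = A.length + B.length)
    (hcorank : ∀ r ≤ p, IsCoRankL A B (i r) (J r) (K r))
    (hJmono : ∀ r < p, J r ≤ J (r + 1)) (hKmono : ∀ r < p, K r ≤ K (r + 1)) :
    ((List.range p).map (fun r =>
        ((A.drop (J r)).take (J (r + 1) - J r)).merge
          ((B.drop (K r)).take (K (r + 1) - K r)) (· ≤ ·))).flatten =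
      A.merge B (· ≤ ·) := by
  obtain ⟨hsum₀, -⟩ := hcorank 0 (Nat.zero_le p)
  obtain ⟨hsumₚ, hJₚ, hKₚ, -⟩ := hcorank p le_rfl
  have htelescope := List.flatten_map_range_append_of_eq_append
    (f := fun r => (A.drop (J r)).merge (B.drop (K r)) (· ≤ ·)) fun r hr =>
      (hcorank (r + 1) hr).merge_drop_eq_append hA hB (hJmono r hr) (hKmono r hr)
  rwa [show J 0 = 0 by omega, show K 0 = 0 by omega, show J p = A.length by omega,
    show K p = B.length by omega, List.drop_length, List.drop_length, List.nil_merge,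
    List.append_nil, List.drop_zero, List.drop_zero] at htelescope

theorem parallel_merge_correct {α : Type*} [LinearOrder α]
    (A B : List α) (hA : A.Pairwise (· ≤ ·)) (hB : B.Pairwise (· ≤ ·))
    (p : ℕ) (i J K : ℕ → ℕ)
    (hi0 : i 0 = 0) (hip : i p = A.length + B.length)
    (himono : ∀ r < p, i r ≤ i (r + 1))
    (hcorank : ∀ r ≤ p, IsCoRankL A B (i r) (J r) (K r))
    (hJmono : ∀ r < p, J r ≤ J (r + 1)) (hKmono : ∀ r < p, K r ≤ K (r + 1)) :
    ((List.range p).map (fun r =>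
        ((A.drop (J r)).take (J (r + 1) - J r)).merge
          ((B.drop (K r)).take (K (r + 1) - K r)) (· ≤ ·))).flatten =
      A.merge B (· ≤ ·) :=
  parallel_merge_correct_general A B hA hB p i J K hi0 hip hcorank hJmono hKmono
end
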